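/- Let f : (ℤ/rℤ)^n → (ℤ/rℤ)^{n+1} be the linear map sending e_i to e_i - e_{i-1} (coordinates of the target indexed 0,...,n). Then f is injective and intertwines the permutation action of B_n on (ℤ/rℤ)^n with the action on (ℤ/rℤ)^{n+1} given by the matrices M(β) from the virtual undercrossing homomorphism Υ_r; moreover f ∘ φ_r = v, where v(β) is the translation part of Υ_r(β). Consequently ker(φ_r) = ker(v). -/

import Mathlib

/-- The braid relations on `m` generators `σ_1, ..., σ_m` (indexed here by `Fin m`):
`σ i σ j = σ j σ i` for `|i - j| ≥ 2` and `σ i σ (i+1) σ i = σ (i+1) σ i σ (i+1)`. -/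
def braidRels (m : ℕ) : Set (FreeGroup (Fin m)) :=
  { w | (∃ i j : Fin m, (i : ℕ) + 2 ≤ (j : ℕ) ∧
          w = FreeGroup.of i * FreeGroup.of j * (FreeGroup.of i)⁻¹ * (FreeGroup.of j)⁻¹) ∨
        (∃ i j : Fin m, (i : ℕ) + 1 = (j : ℕ) ∧
          w = FreeGroup.of i * FreeGroup.of j * FreeGroup.of i *
              (FreeGroup.of j * FreeGroup.of i * FreeGroup.of j)⁻¹) }

/-- The braid group on `m + 1` strands, presented with `m` Artin generators.
`BraidGroup (n-1)` is the braid group `B_n`. -/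
abbrev BraidGroup (m : ℕ) : Type := PresentedGroup (braidRels m)

/-- The `k`-th Artin generator (`0`-indexed: `braidGen k` is the Artin generator
`σ_{k+1}` of the paper, braiding strands `k` and `k+1` in `0`-indexed numbering);
junk value `1` if `k` is out of range. -/
def braidGen {m : ℕ} (k : ℕ) : BraidGroup m :=
  if h : k < m then PresentedGroup.of (⟨k, h⟩ : Fin m) else 1

/-- The matrix `P_i` of the virtual undercrossing map: the identity `(n+1)×(n+1)` matrix
over `ℤ/rℤ` (coordinates indexed `0, ..., n`) with column `k+1` (the paper's `i = k+1`,
for the `0`-indexed generator `k`) replaced by `e_k - e_{k+1} + e_{k+2}`; identity if `k`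
is out of range. -/
def Pmat (n r : ℕ) (k : ℕ) : Matrix (Fin (n + 1)) (Fin (n + 1)) (ZMod r) :=
  Matrix.of fun s t =>
    if h : k + 1 < n then
      if t = (⟨k + 1, by omega⟩ : Fin (n + 1)) then
        (if s = (⟨k, by omega⟩ : Fin (n + 1)) then 1
         else if s = (⟨k + 1, by omega⟩ : Fin (n + 1)) then -1
         else if s = (⟨k + 2, by omega⟩ : Fin (n + 1)) then 1 else 0)
      else if s = t then 1 else 0
    else if s = t then 1 else 0

/-- The translation part `e_{i+1} - e_i` of the virtual undercrossing map on the
`0`-indexed generator `k` (the paper's `σ_i` with `i = k+1`): `e_{k+2} - e_{k+1}`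
in `(ℤ/rℤ)^{n+1}`; zero if `k` is out of range. -/
def vvec (n r : ℕ) (k : ℕ) : Fin (n + 1) → ZMod r :=
  if h : k + 1 < n then
    Pi.single (⟨k + 2, by omega⟩ : Fin (n + 1)) 1 -
      Pi.single (⟨k + 1, by omega⟩ : Fin (n + 1)) 1
  else 0

/-- The linear map `f : (ℤ/rℤ)ⁿ → (ℤ/rℤ)^{n+1}` sending the basis vector `e_k`
(`0`-indexed source) to `e_{k+1} - e_k` (target coordinates indexed `0, ..., n`),
i.e. `(f x) t = x (t-1) - x t` with out-of-range values read as `0`. -/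
def Fmap (n r : ℕ) (x : Fin n → ZMod r) : Fin (n + 1) → ZMod r := fun t =>
  (if h : 1 ≤ (t : ℕ) then x ⟨(t : ℕ) - 1, by have := t.isLt; omega⟩ else 0) -
    (if h : (t : ℕ) < n then x ⟨(t : ℕ), h⟩ else 0)


/-! The assignment `σ_k ↦ (e_{k+1}, (k k+1))` respects the braid relations in the wreath product
`ℤ/rℤ ≀ Sₙ`, so it defines a homomorphism from `B_n`, whose two components are the permutation
`π` and the crossed homomorphism `φ_r`. The linear part `M(β)` depends only on `π β`: it is the
matrix that fixes `e₀` and acts on the image of `Fmap` by transporting the permutation action,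
and on a transposition `(k k+1)` it is `P_{k+1}`. With `v := Fmap ∘ φ_r` the cocycle identity
for `v` is `Fmap` applied to that of `φ_r`, and `ker φ_r = ker v` because `Fmap` is injective. -/

open Equiv
open scoped Matrix

theorem Equiv.swap_commute_swap {α : Type*} [DecidableEq α] {a b c d : α} (hac : a ≠ c)
    (had : a ≠ d) (hbc : b ≠ c) (hbd : b ≠ d) : Commute (swap a b) (swap c d) := by
  rw [Commute, SemiconjBy, ← mul_inv_eq_iff_eq_mul, ← swap_apply_apply,
    swap_apply_of_ne_of_ne hac.symm hbc.symm, swap_apply_of_ne_of_ne had.symm hbd.symm]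

theorem Equiv.swap_braid {α : Type*} [DecidableEq α] {a b c : α} (hab : a ≠ b)
    (hac : a ≠ c) (hbc : b ≠ c) :
    swap a b * swap b c * swap a b = swap b c * swap a b * swap b c := by
  have h₁ : swap a b * swap b c * (swap a b)⁻¹ = swap a c := by
    rw [← swap_apply_apply, swap_apply_right, swap_apply_of_ne_of_ne hac.symm hbc.symm]
  have h₂ : swap b c * swap a b * (swap b c)⁻¹ = swap a c := by
    rw [← swap_apply_apply, swap_apply_left, swap_apply_of_ne_of_ne hab hac]
  rw [swap_inv] at h₁ h₂
  rw [h₁, h₂]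

theorem Pi.single_comp_perm_inv {α R : Type*} [DecidableEq α] [Zero R] (σ : Perm α) (a : α)
    (c : R) :
    (fun i => (Pi.single a c : α → R) (σ⁻¹ i)) = Pi.single (σ a) c := by
  funext i
  simp only [Pi.single_apply, Perm.inv_eq_iff_eq]

namespace BraidGroup

variable {m : ℕ} {G : Type*} [Group G]

def lift (g : Fin m → G)
    (hcomm : ∀ i j : Fin m, (i : ℕ) + 2 ≤ j → g i * g j = g j * g i)
    (hbraid : ∀ i j : Fin m, (i : ℕ) + 1 = j → g i * g j * g i = g j * g i * g j) :
    BraidGroup m →* G :=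
  PresentedGroup.toGroup (rels := braidRels m) (f := g) <| by
    rintro w (⟨i, j, hij, rfl⟩ | ⟨i, j, hij, rfl⟩)
    · simp only [map_mul, map_inv, FreeGroup.lift_apply_of, hcomm i j hij]
      group
    · simp only [map_mul, map_inv, FreeGroup.lift_apply_of, hbraid i j hij, mul_inv_cancel]

theorem lift_braidGen (g : Fin m → G) hcomm hbraid {k : ℕ} (hk : k < m) :
    lift g hcomm hbraid (braidGen k) = g ⟨k, hk⟩ := by
  rw [braidGen, dif_pos hk]
  exact PresentedGroup.toGroup.of _

end BraidGroup

@[simp] theorem mulAutArrow_perm_apply {α M : Type*} [Monoid M] (σ : Perm α) (F : α → M)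
    (a : α) : mulAutArrow σ F a = F (σ⁻¹ a) := rfl

/-- The wreath product `ℤ/rℤ ≀ Sₙ`. The base is written multiplicatively because
`SemidirectProduct` needs a multiplicative normal factor; `Sₙ` permutes coordinates. -/
abbrev ZModWreath (n r : ℕ) : Type :=
  (Fin n → Multiplicative (ZMod r)) ⋊[mulAutArrow] Perm (Fin n)

namespace ZModWreath

variable {n : ℕ} (r : ℕ)

def gen (k : ℕ) (hk : k + 1 < n) : ZModWreath n r :=
  ⟨Pi.mulSingle ⟨k + 1, hk⟩ (Multiplicative.ofAdd 1), swap ⟨k, Nat.lt_of_succ_lt hk⟩ ⟨k + 1, hk⟩⟩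

variable {r}

theorem gen_commute {i j : ℕ} (hij : i + 2 ≤ j) (hj : j + 1 < n) :
    gen r i (by omega) * gen r j hj = gen r j hj * gen r i (by omega) := by
  refine SemidirectProduct.ext (funext fun t => ?_) ?_
  · simp only [gen, SemidirectProduct.mul_left, Pi.mul_apply, mulAutArrow_perm_apply, swap_inv,
      Pi.mulSingle_apply, swap_apply_def, Fin.ext_iff, apply_ite Fin.val]
    split_ifs <;> first | (exfalso; omega) | simp
  · exact (swap_commute_swap (Fin.mk_lt_mk.2 (by omega)).ne (Fin.mk_lt_mk.2 (by omega)).ne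
      (Fin.mk_lt_mk.2 (by omega)).ne (Fin.mk_lt_mk.2 (by omega)).ne).eq

theorem gen_braid {i : ℕ} (h : i + 2 < n) :
    gen r i (by omega) * gen r (i + 1) h * gen r i (by omega) =
      gen r (i + 1) h * gen r i (by omega) * gen r (i + 1) h := by
  refine SemidirectProduct.ext (funext fun t => ?_) ?_
  · simp only [gen, SemidirectProduct.mul_left, SemidirectProduct.mul_right, Pi.mul_apply,
      mulAutArrow_perm_apply, mul_inv_rev, Perm.mul_apply, swap_inv, Pi.mulSingle_apply,
      swap_apply_def, Fin.ext_iff, apply_ite Fin.val]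
    split_ifs <;> first | (exfalso; omega) | simp [mul_comm]
  · exact swap_braid (Fin.mk_lt_mk.2 (by omega)).ne (Fin.mk_lt_mk.2 (by omega)).ne
      (Fin.mk_lt_mk.2 (by omega)).ne

end ZModWreath

section Fmap

variable {n r : ℕ}

theorem Fmap_add (x y : Fin n → ZMod r) : Fmap n r (x + y) = Fmap n r x + Fmap n r y := by
  funext t
  simp only [Fmap, Pi.add_apply]
  split_ifs <;> ring

theorem Fmap_smul (c : ZMod r) (x : Fin n → ZMod r) : Fmap n r (c • x) = c • Fmap n r x := by
  funext t
  simp only [Fmap, Pi.smul_apply, smul_eq_mul]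
  split_ifs <;> ring

variable (n r) in
def FmapLinear : (Fin n → ZMod r) →ₗ[ZMod r] (Fin (n + 1) → ZMod r) where
  toFun := Fmap n r
  map_add' := Fmap_add
  map_smul' := Fmap_smul

@[simp] theorem FmapLinear_apply (x : Fin n → ZMod r) : FmapLinear n r x = Fmap n r x := rfl

theorem Fmap_zero : Fmap n r 0 = 0 := (FmapLinear n r).map_zero

theorem Fmap_sub (x y : Fin n → ZMod r) : Fmap n r (x - y) = Fmap n r x - Fmap n r y :=
  (FmapLinear n r).map_sub x y

theorem Fmap_single (j : Fin n) (c : ZMod r) :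
    Fmap n r (Pi.single j c) = Pi.single j.succ c - Pi.single j.castSucc c := by
  funext t
  simp only [Fmap, Pi.sub_apply, Pi.single_apply, Fin.ext_iff, Fin.val_succ, Fin.val_castSucc]
  split_ifs <;> first | (exfalso; omega) | ring

theorem Fmap_injective : Function.Injective (Fmap n r) := by
  refine (injective_iff_map_eq_zero (FmapLinear n r)).mpr fun x hx => funext fun j => ?_
  obtain ⟨m, hm⟩ := j
  induction m with
  | zero => simpa [Fmap, hm] using congrFun hx 0
  | succ m ih =>
    have := congrFun hx ⟨m + 1, by omega⟩
    simpa [Fmap, hm, ih (by omega)] using this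

end Fmap

section undercrossingMatrix

variable {n : ℕ} (r : ℕ)

/-- Column `t` is `e₀ + Fmap (σ • χ_{<t})`. Since `e_t = e₀ + Fmap χ_{<t}`, this is the matrix
that fixes `e₀` and acts through `Fmap` as the permutation action of `σ`. -/
def undercrossingMatrix (σ : Perm (Fin n)) : Matrix (Fin (n + 1)) (Fin (n + 1)) (ZMod r) :=
  (Matrix.of fun t =>
    Pi.single 0 1 + Fmap n r fun j => if ((σ⁻¹ j : Fin n) : ℕ) < t then 1 else 0)ᵀ

variable {r}

theorem undercrossingMatrix_col (σ : Perm (Fin n)) (t : Fin (n + 1)) :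
    (undercrossingMatrix r σ).col t =
      Pi.single 0 1 + Fmap n r fun j => if ((σ⁻¹ j : Fin n) : ℕ) < t then 1 else 0 :=
  rfl

theorem undercrossingMatrix_mulVec_single_zero (σ : Perm (Fin n)) :
    undercrossingMatrix r σ *ᵥ Pi.single 0 1 = Pi.single 0 1 := by
  simp only [Matrix.mulVec_single_one, undercrossingMatrix_col, Fin.val_zero, Nat.not_lt_zero,
    if_false]
  rw [← Pi.zero_def, Fmap_zero, add_zero]

theorem undercrossingMatrix_col_succ_sub_col_castSucc (σ : Perm (Fin n)) (j : Fin n) :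
    (undercrossingMatrix r σ).col j.succ - (undercrossingMatrix r σ).col j.castSucc =
      Fmap n r (Pi.single (σ j) 1) := by
  rw [undercrossingMatrix_col, undercrossingMatrix_col, add_sub_add_left_eq_sub, ← Fmap_sub]
  congr 1
  funext i
  simp only [Pi.sub_apply, Pi.single_apply, Fin.val_succ, Fin.val_castSucc, ← Perm.inv_eq_iff_eq,
    ← Fin.val_inj]
  split_ifs <;> first | (exfalso; omega) | ring

theorem undercrossingMatrix_mulVec_Fmap (σ : Perm (Fin n)) (x : Fin n → ZMod r) :
    undercrossingMatrix r σ *ᵥ Fmap n r x = Fmap n r fun j => x (σ⁻¹ j) := by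
  suffices (undercrossingMatrix r σ).mulVecLin ∘ₗ FmapLinear n r =
      FmapLinear n r ∘ₗ LinearMap.funLeft (ZMod r) (ZMod r) ⇑σ⁻¹ from LinearMap.congr_fun this x
  refine (Pi.basisFun (ZMod r) (Fin n)).ext fun j => ?_
  simp only [LinearMap.comp_apply, Pi.basisFun_apply, FmapLinear_apply, Matrix.mulVecLin_apply,
    Fmap_single, Matrix.mulVec_sub, Matrix.mulVec_single_one,
    undercrossingMatrix_col_succ_sub_col_castSucc]
  rw [← Fmap_single]
  exact congrArg (Fmap n r) (Pi.single_comp_perm_inv σ j 1).symm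

theorem undercrossingMatrix_mul (σ τ : Perm (Fin n)) :
    undercrossingMatrix r (σ * τ) = undercrossingMatrix r σ * undercrossingMatrix r τ := by
  refine Matrix.ext_col fun t => ?_
  rw [show (undercrossingMatrix r σ * undercrossingMatrix r τ).col t =
    undercrossingMatrix r σ *ᵥ (undercrossingMatrix r τ).col t from rfl, undercrossingMatrix_col τ,
    Matrix.mulVec_add, undercrossingMatrix_mulVec_single_zero, undercrossingMatrix_mulVec_Fmap,
    undercrossingMatrix_col]
  rfl

theorem undercrossingMatrix_swap {k : ℕ} (hk : k + 1 < n) :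
    undercrossingMatrix r (swap ⟨k, Nat.lt_of_succ_lt hk⟩ ⟨k + 1, hk⟩) = Pmat n r k := by
  ext s t
  simp only [undercrossingMatrix, Matrix.transpose_apply, Matrix.of_apply, Pmat, Fmap,
    Pi.add_apply, Pi.single_apply, swap_inv, swap_apply_def, Fin.ext_iff, apply_ite Fin.val,
    Fin.val_zero, dif_pos hk]
  split_ifs <;> first | (exfalso; omega) | ring

end undercrossingMatrix

section BraidAction

variable (n r : ℕ)

def braidWreath : BraidGroup (n - 1) →* ZModWreath n r :=
  BraidGroup.lift (fun i => ZModWreath.gen r i (by omega))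
    (fun _ j hij => ZModWreath.gen_commute hij (by omega))
    (fun i j hij => by
      obtain ⟨j, hj⟩ := j
      subst hij
      exact ZModWreath.gen_braid (by omega))

def braidPerm : BraidGroup (n - 1) →* Perm (Fin n) :=
  SemidirectProduct.rightHom.comp (braidWreath n r)

def braidCrossedHom (β : BraidGroup (n - 1)) : Fin n → ZMod r :=
  fun t => ((braidWreath n r β).left t).toAdd

variable {n r}

theorem braidWreath_braidGen {k : ℕ} (hk : k + 1 < n) :
    braidWreath n r (braidGen k) = ZModWreath.gen r k hk :=
  BraidGroup.lift_braidGen _ _ _ (by omega)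

theorem braidPerm_braidGen {k : ℕ} (hk : k + 1 < n) :
    braidPerm n r (braidGen k) = swap ⟨k, Nat.lt_of_succ_lt hk⟩ ⟨k + 1, hk⟩ := by
  simp [braidPerm, braidWreath_braidGen hk, ZModWreath.gen]

theorem braidCrossedHom_braidGen {k : ℕ} (hk : k + 1 < n) :
    braidCrossedHom n r (braidGen k) = Pi.single ⟨k + 1, hk⟩ 1 := by
  funext t
  simp only [braidCrossedHom, braidWreath_braidGen hk, ZModWreath.gen, Pi.mulSingle_apply,
    Pi.single_apply, apply_ite Multiplicative.toAdd, toAdd_ofAdd, toAdd_one]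

theorem braidCrossedHom_mul (α β : BraidGroup (n - 1)) :
    braidCrossedHom n r (α * β) =
      braidCrossedHom n r α + fun t => braidCrossedHom n r β ((braidPerm n r α)⁻¹ t) := by
  unfold braidCrossedHom
  rw [map_mul]
  rfl

end BraidAction

/-- the injective linear map `Fmap : (ℤ/rℤ)ⁿ → (ℤ/rℤ)^{n+1}`,
`e_k ↦ e_{k+1} - e_k`, intertwines the permutation action of `B_n` on `(ℤ/rℤ)ⁿ` with
the action of the matrices `M(β)` of the virtual undercrossing homomorphism
`Υ_r(β) = (M(β), v(β))`; moreover `Fmap ∘ φ_r = v`, and consequently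
`ker(φ_r) = ker(v)`. -/
theorem stmt_14 (n r : ℕ) :
    ∃ (π : BraidGroup (n - 1) →* Equiv.Perm (Fin n))
      (φ : BraidGroup (n - 1) → (Fin n → ZMod r))
      (M : BraidGroup (n - 1) → Matrix (Fin (n + 1)) (Fin (n + 1)) (ZMod r))
      (v : BraidGroup (n - 1) → (Fin (n + 1) → ZMod r)),
      (∀ k : ℕ, ∀ hk : k + 1 < n,
        π (braidGen k) = Equiv.swap ⟨k, by omega⟩ ⟨k + 1, hk⟩) ∧
      (∀ k : ℕ, ∀ hk : k + 1 < n,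
        φ (braidGen k) = Pi.single (⟨k + 1, hk⟩ : Fin n) 1) ∧
      (∀ α β : BraidGroup (n - 1),
        φ (α * β) = φ α + fun t => φ β ((π α)⁻¹ t)) ∧
      (∀ k : ℕ, k + 1 < n → M (braidGen k) = Pmat n r k) ∧
      (∀ k : ℕ, k + 1 < n → v (braidGen k) = vvec n r k) ∧
      (∀ α β : BraidGroup (n - 1), M (α * β) = M α * M β) ∧
      (∀ α β : BraidGroup (n - 1), v (α * β) = (M α).mulVec (v β) + v α) ∧
      Function.Injective (Fmap n r) ∧
      (∀ (β : BraidGroup (n - 1)) (x : Fin n → ZMod r),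
        Fmap n r (fun t => x ((π β)⁻¹ t)) = (M β).mulVec (Fmap n r x)) ∧
      (∀ β : BraidGroup (n - 1), Fmap n r (φ β) = v β) ∧
      (∀ β : BraidGroup (n - 1), φ β = 0 ↔ v β = 0) := by
  refine ⟨braidPerm n r, braidCrossedHom n r, fun β => undercrossingMatrix r (braidPerm n r β),
    fun β => Fmap n r (braidCrossedHom n r β), fun k hk => braidPerm_braidGen hk,
    fun k hk => braidCrossedHom_braidGen hk, braidCrossedHom_mul, fun k hk => ?_, fun k hk => ?_,
    fun α β => ?_, fun α β => ?_, Fmap_injective,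
    fun β x => (undercrossingMatrix_mulVec_Fmap _ x).symm, fun β => rfl,
    fun β => (Fmap_injective.eq_iff' Fmap_zero).symm⟩
  · dsimp only
    rw [braidPerm_braidGen hk, undercrossingMatrix_swap]
  · dsimp only
    rw [braidCrossedHom_braidGen hk, Fmap_single, vvec, dif_pos hk]
    rfl
  · dsimp only
    rw [map_mul, undercrossingMatrix_mul]
  · dsimp only
    rw [braidCrossedHom_mul, Fmap_add, undercrossingMatrix_mulVec_Fmap]
    exact add_comm _ _
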